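/- arXiv:1505.00556 — 4 statements merged into one kernel-verified Lean document; each statement's English description precedes it below -/
import Mathlib

section
/- Let P be an idempotent m×m matrix over a field K, Q := 1 − P, and M an invertible m×m matrix over K. Then det(P · M · P + Q) = det(M) · det(1 − Q · (1 − M⁻¹) · Q). -/
/-! Write `Q = 1 - P`. Since `PMP + Q = 1 - P(1 - M)P`, Sylvester's identity
`det(1 - AB) = det(1 - BA)` together with `P² = P` gives `det(PMP + Q) = det(1 - (1 - M)P)`.
Factoring out `M` gives `1 - (1 - M)P = M(1 - (1 - M⁻¹)Q)`, and the same Sylvester step for the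
idempotent `Q` turns `det(1 - (1 - M⁻¹)Q)` into `det(1 - Q(1 - M⁻¹)Q)`. -/

namespace Matrix

theorem det_one_sub_mul_mul_of_isIdempotentElem {n R : Type*} [Fintype n] [DecidableEq n]
    [CommRing R] {E : Matrix n n R} (hE : IsIdempotentElem E) (A : Matrix n n R) :
    det (1 - E * A * E) = det (1 - A * E) := by
  rw [Matrix.mul_assoc, det_one_sub_mul_comm, Matrix.mul_assoc, hE.eq]

end Matrix

theorem one_sub_one_sub_mul_eq_mul {R : Type*} [Ring R] {M N : R} (hMN : M * N = 1) (P : R) :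
    1 - (1 - M) * P = M * (1 - (1 - N) * (1 - P)) := by
  have hM : M * (1 - N) = M - 1 := by rw [mul_sub, mul_one, hMN]
  rw [mul_sub M, mul_one, ← mul_assoc, hM]
  noncomm_ring

/-- for an idempotent `P`, `Q := 1 − P`, and an invertible matrix `M`,
`det(PMP + Q) = det(M) · det(1 − Q(1 − M⁻¹)Q)`. -/
theorem stmt_5 {K : Type*} [Field K] {m : ℕ}
    (P M : Matrix (Fin m) (Fin m) K) (hP : P * P = P) (hM : IsUnit M) :
    (P * M * P + (1 - P)).det
      = M.det * (1 - (1 - P) * (1 - M⁻¹) * (1 - P)).det := by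
  have hPMP : P * M * P + (1 - P) = 1 - P * (1 - M) * P := by
    rw [mul_sub, sub_mul, mul_one, hP]
    abel
  calc (P * M * P + (1 - P)).det
      = (1 - (1 - M) * P).det := by
        rw [hPMP, Matrix.det_one_sub_mul_mul_of_isIdempotentElem hP]
    _ = (M * (1 - (1 - M⁻¹) * (1 - P))).det := by
        rw [one_sub_one_sub_mul_eq_mul (M.mul_nonsing_inv (M.isUnit_iff_isUnit_det.mp hM))]
    _ = M.det * (1 - (1 - P) * (1 - M⁻¹) * (1 - P)).det := by
        rw [Matrix.det_mul, Matrix.det_one_sub_mul_mul_of_isIdempotentElem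
          (IsIdempotentElem.one_sub hP)]
end

section
/- Suppose the formal power series F satisfies the string equation. Then the constant coefficient of ∂₁F is 0, and for every j ∈ E with 0 < j < h and every integer k ≥ 1, the constant coefficient of ∂_j ∂₁^k F equals (h−1)/h if (j,k) = (h−1, 2), and equals 0 otherwise. -/
/-!
Evaluated at a monomial `m` in the variables `t_i` with `i < h` only, the string equation loses
its terms `t_{i+h} ∂_i F`, so `(∂₁F)(m)` is `1/(2h)` times the coefficient of `m` in
`∑_{i+j=h} i j t_i t_j`. The constant coefficient of `∂_j ∂₁^{n+1} F` is a multiple of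
`(∂₁F)(t_j t_1^n)`, which therefore vanishes unless `t_j t_1^n` is quadratic (`n = 1`) and
`j + 1 = h`.
-/

open scoped Classical

/-- The formal partial derivative `∂_i` on formal power series over `ℚ` in variables
indexed by `σ`, defined coefficientwise by
`coeff_m (∂_i F) = (m(i) + 1) · coeff_{m + e_i} (F)`. -/
noncomputable def pd {σ : Type*} (i : σ) (F : (σ →₀ ℕ) → ℚ) : (σ →₀ ℕ) → ℚ :=
  fun m => ((m i : ℚ) + 1) * F (m + Finsupp.single i 1)

open Finsupp Finset

section

variable {σ : Type*}

lemma pd_apply_zero (i : σ) (G : (σ →₀ ℕ) → ℚ) : pd i G 0 = G (single i 1) := by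
  simp [pd]

lemma iterate_pd_apply (i : σ) (G : (σ →₀ ℕ) → ℚ) (k : ℕ) (m : σ →₀ ℕ) :
    (pd i)^[k] G m = (∏ r ∈ range k, ((m i : ℚ) + 1 + r)) * G (m + single i k) := by
  induction k generalizing m with
  | zero => simp
  | succ k ih =>
    rw [Function.iterate_succ_apply', pd, ih, prod_range_succ', add_assoc, ← single_add,
      add_comm 1 k, Finsupp.add_apply, single_eq_same]
    push_cast
    ring_nf

lemma pd_iterate_succ_apply_zero (i j : σ) (G : (σ →₀ ℕ) → ℚ) (n : ℕ) :
    pd j ((pd i)^[n + 1] G) 0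
      = (∏ r ∈ range n, (((single j 1 i : ℕ) : ℚ) + 1 + r)) * pd i G (single j 1 + single i n) := by
  rw [pd_apply_zero, Function.iterate_succ_apply, iterate_pd_apply]

variable [DecidableEq (σ →₀ ℕ)] (P : σ × σ → Prop) [DecidablePred P] (w : σ × σ → ℚ)

lemma finsum_ite_eq_single_add_single_eq_zero_of_degree_ne {m : σ →₀ ℕ} (hm : m.degree ≠ 2) :
    ∑ᶠ p : σ × σ, (if P p ∧ m = single p.1 1 + single p.2 1 then w p else 0) = 0 := by
  refine finsum_eq_zero_of_forall_eq_zero fun p => if_neg fun ⟨_, hp⟩ => hm ?_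
  simp [hp, degree_single]

lemma single_apply_add_one_mul_finsum_ite_eq_single_add_single (a b : σ) :
    (((single a 1 b : ℕ) : ℚ) + 1) * ∑ᶠ p : σ × σ,
        (if P p ∧ single a 1 + single b 1 = single p.1 1 + single p.2 1 then w p else 0)
      = (if P (a, b) then w (a, b) else 0) + (if P (b, a) then w (b, a) else 0) := by
  have hiff (c d : σ) : single a 1 + single b 1 = single c 1 + single d 1 ↔
      (a = c ∧ b = d) ∨ (a = d ∧ b = c) := by
    simp [single_add_single_eq_single_add_single one_ne_zero one_ne_zero]
  by_cases hab : a = b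
  · subst hab
    rw [finsum_eq_single _ (a, a)]
    · simp only [single_eq_same, and_true]
      push_cast
      ring
    · rintro p hp
      refine if_neg fun ⟨_, h⟩ => hp ?_
      rw [hiff] at h
      obtain ⟨h₁, h₂⟩ | ⟨h₂, h₁⟩ := h <;> exact Prod.ext h₁.symm h₂.symm
  · rw [finsum_eq_sum_of_support_subset (s := {(a, b), (b, a)}), sum_pair, single_eq_of_ne' hab]
    · simp [add_comm (single b 1)]
    · exact fun h => hab (congrArg Prod.fst h)
    · intro p hp
      simp only [Function.mem_support, ne_eq, ite_eq_right_iff, not_forall, hiff] at hp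
      obtain ⟨⟨_, h | h⟩, _⟩ := hp <;> simp [Prod.ext_iff, h]

end

theorem stmt_6_general (h : ℕ) (E : Set ℕ)
    (h1E : (1 : ℕ) ∈ E) (hEc : ∀ i ∈ E, i + h ∈ E)
    (F : ((↥E) →₀ ℕ) → ℚ)
    (hstring : ∀ m : (↥E) →₀ ℕ,
      (∑ᶠ i : ↥E, ((((i : ℕ) : ℚ) + (h : ℚ)) / (h : ℚ)) *
          (if 1 ≤ m ⟨(i : ℕ) + h, hEc (i : ℕ) i.2⟩ then
            pd i F (m - Finsupp.single (⟨(i : ℕ) + h, hEc (i : ℕ) i.2⟩ : ↥E) 1)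
          else 0))
        - pd (⟨1, h1E⟩ : ↥E) F m
        + (1 / (2 * (h : ℚ))) *
          (∑ᶠ p : ↥E × ↥E,
            (if ((p.1 : ℕ) + (p.2 : ℕ) = h ∧
                m = Finsupp.single p.1 1 + Finsupp.single p.2 1) then
              ((p.1 : ℕ) : ℚ) * ((p.2 : ℕ) : ℚ)
            else 0)) = 0) :
    pd (⟨1, h1E⟩ : ↥E) F 0 = 0 ∧
    ∀ (j : ℕ) (hj : j ∈ E), 0 < j → j < h → ∀ k : ℕ, 1 ≤ k →
      pd (⟨j, hj⟩ : ↥E) ((pd (⟨1, h1E⟩ : ↥E))^[k] F) 0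
        = if j = h - 1 ∧ k = 2 then ((h : ℚ) - 1) / (h : ℚ) else 0 := by
  set one : E := ⟨1, h1E⟩
  have hlow (m : E →₀ ℕ) (hm : ∀ i : E, h ≤ i → m i = 0) : pd one F m = 1 / (2 * h) *
      ∑ᶠ p : E × E, (if (p.1 : ℕ) + p.2 = h ∧ m = single p.1 1 + single p.2 1
        then ((p.1 : ℕ) : ℚ) * (p.2 : ℕ) else 0) := by
    have hshift : ∀ i : E, m ⟨i + h, hEc i i.2⟩ = 0 := fun i => hm _ (Nat.le_add_left h i)
    have H := hstring m
    simp only [hshift, Nat.le_zero, one_ne_zero, if_false, mul_zero, finsum_zero, zero_sub] at H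
    linarith
  refine ⟨?_, fun j hj hj0 hjh k hk => ?_⟩
  · rw [hlow 0 (by simp), finsum_ite_eq_single_add_single_eq_zero_of_degree_ne _ _ (by simp),
      mul_zero]
  obtain ⟨n, rfl⟩ : ∃ n, k = n + 1 := ⟨k - 1, by omega⟩
  have hm : ∀ i : E, h ≤ i → (single (⟨j, hj⟩ : E) 1 + single one n : E →₀ ℕ) i = 0 := by
    intro i hi
    have hne (a : E) (ha : (a : ℕ) < h) : a ≠ i := fun hai => by rw [hai] at ha; omega
    rw [Finsupp.add_apply, single_eq_of_ne' (hne _ hjh),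
      single_eq_of_ne' (hne one (show 1 < h by omega)), add_zero]
  rw [pd_iterate_succ_apply_zero, hlow _ hm]
  rcases eq_or_ne n 1 with rfl | hn
  · rw [prod_range_one, Nat.cast_zero, add_zero, mul_left_comm,
      single_apply_add_one_mul_finsum_ite_eq_single_add_single]
    obtain rfl | hjh' := eq_or_ne h (j + 1)
    · simp only [one, add_comm 1 j, if_true, Nat.add_sub_cancel, true_and]
      field_simp
      push_cast
      ring
    · simp [one, hjh'.symm, show 1 + j ≠ h by omega, show j ≠ h - 1 by omega]
  · rw [finsum_ite_eq_single_add_single_eq_zero_of_degree_ne, mul_zero, mul_zero,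
      if_neg (by omega)]
    simp only [map_add, degree_single]
    omega

/-- if a formal power series `F` in the variables `(t_i)_{i ∈ E}` (where
`E = S + hℕ` is the set of positive exponents attached to `h` and the symmetric set
`S ⊆ {1,…,h−1}` with `1 ∈ S`) satisfies the string equation
`∑_{i ∈ E} ((i+h)/h) t_{i+h} ∂_i F − ∂₁ F + (1/(2h)) ∑_{i+j=h} i j t_i t_j = 0`
(coefficientwise; the coefficient of `t_{i+h}·∂_iF` at a monomial `m` is
`coeff_{m − e_{i+h}}(∂_i F)` when `m(i+h) ≥ 1` and `0` otherwise, and the coefficient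
of `t_i t_j` at `m` is `1` iff `m = e_i + e_j`), then the constant coefficient of
`∂₁F` vanishes and, for `j ∈ E` with `0 < j < h` and `k ≥ 1`, the constant coefficient
of `∂_j ∂₁^k F` equals `(h−1)/h` if `(j,k) = (h−1,2)` and `0` otherwise. -/
theorem stmt_6 (h : ℕ) (hh : 2 ≤ h) (S : Set ℕ)
    (hS1 : 1 ∈ S) (hSrange : ∀ j ∈ S, 1 ≤ j ∧ j ≤ h - 1)
    (hSsym : ∀ j : ℕ, j ∈ S ↔ h - j ∈ S)
    (E : Set ℕ) (hE : E = {i | ∃ j ∈ S, ∃ s : ℕ, i = j + h * s})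
    (h1E : (1 : ℕ) ∈ E) (hEc : ∀ i ∈ E, i + h ∈ E)
    (F : ((↥E) →₀ ℕ) → ℚ)
    (hstring : ∀ m : (↥E) →₀ ℕ,
      (∑ᶠ i : ↥E, ((((i : ℕ) : ℚ) + (h : ℚ)) / (h : ℚ)) *
          (if 1 ≤ m ⟨(i : ℕ) + h, hEc (i : ℕ) i.2⟩ then
            pd i F (m - Finsupp.single (⟨(i : ℕ) + h, hEc (i : ℕ) i.2⟩ : ↥E) 1)
          else 0))
        - pd (⟨1, h1E⟩ : ↥E) F m
        + (1 / (2 * (h : ℚ))) *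
          (∑ᶠ p : ↥E × ↥E,
            (if ((p.1 : ℕ) + (p.2 : ℕ) = h ∧
                m = Finsupp.single p.1 1 + Finsupp.single p.2 1) then
              ((p.1 : ℕ) : ℚ) * ((p.2 : ℕ) : ℚ)
            else 0)) = 0) :
    pd (⟨1, h1E⟩ : ↥E) F 0 = 0 ∧
    ∀ (j : ℕ) (hj : j ∈ E), 0 < j → j < h → ∀ k : ℕ, 1 ≤ k →
      pd (⟨j, hj⟩ : ↥E) ((pd (⟨1, h1E⟩ : ↥E))^[k] F) 0
        = if j = h - 1 ∧ k = 2 then ((h : ℚ) - 1) / (h : ℚ) else 0 :=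
  stmt_6_general h E h1E hEc F hstring
end

section
/- Define a : ℤ → ℚ by a_m = 0 if m < 0 or if 3 does not divide m, and a_{3k} = (−3/4)^k · (1/k!) · ∏_{m=0}^{k−1} (m + 5/6)(m + 1/6) for k ≥ 0. For i ≥ 0 let Γ_i be the 2×2 rational matrix with rows [a_{2i}, −((4i+3)/(4i+1))·a_{2i+1}] and [a_{2i−1}, −((4i+1)/(4i−1))·a_{2i}]. Then Γ₀ is the identity matrix, and (Γ_i)_{i ≥ 0} solves the A₁ reduced string equation: with Γ_{−1} = 0, for every i ≥ 0 one has A·Γ_i + B·Γ_{i+1} + (i−1)·Γ_{i−1} − (1/2)·ρ·Γ_{i−1} = Γ_i·A + Γ_{i+1}·B. -/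
/-!
Entrywise, the string equation at level `i` says exactly that `a` satisfies the three-term
recurrence `16 n aₙ = -(2n - 1)(2n - 5) aₙ₋₃` at `n = 2i, 2i + 1, 2i + 2`; the ratios
`(4i + 3)/(4i + 1)` and `(4i + 1)/(4i - 1)` in `Γᵢ` are what make the four entries collapse
to it.
The closed form of `a₃ₖ` is the solution of this recurrence with `a₀ = 1`; since `a` vanishes
off the nonnegative multiples of `3`, the convention `Γ₋₁ = 0` is the same formula at `i = -1`.
-/

open scoped Classical

/-- The sequence `a : ℤ → ℚ` with `a_m = 0` for `m < 0` or `3 ∤ m`, and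
`a_{3k} = (−3/4)^k (1/k!) ∏_{m=0}^{k−1} (m + 5/6)(m + 1/6)`. -/
noncomputable def aSeq : ℤ → ℚ := fun m =>
  if 0 ≤ m ∧ (3 : ℤ) ∣ m then
    (-3 / 4 : ℚ) ^ (m / 3).toNat * (1 / ((m / 3).toNat.factorial : ℚ)) *
      ∏ j ∈ Finset.range (m / 3).toNat, (((j : ℚ) + 5 / 6) * ((j : ℚ) + 1 / 6))
  else 0

/-- The matrices `Γ_i = [[a_{2i}, −((4i+3)/(4i+1)) a_{2i+1}], [a_{2i−1}, −((4i+1)/(4i−1)) a_{2i}]]`. -/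
noncomputable def GammaA1 (i : ℕ) : Matrix (Fin 2) (Fin 2) ℚ :=
  !![aSeq (2 * (i : ℤ)), -((4 * (i : ℚ) + 3) / (4 * (i : ℚ) + 1)) * aSeq (2 * (i : ℤ) + 1);
     aSeq (2 * (i : ℤ) - 1), -((4 * (i : ℚ) + 1) / (4 * (i : ℚ) - 1)) * aSeq (2 * (i : ℤ))]

lemma string_equation_of_entries {K : Type*} [Field K] [CharZero K] (x : K)
    (P G N : Matrix (Fin 2) (Fin 2) K)
    (h₀₀ : N 1 0 + (x - 3 / 4) * P 0 0 = G 0 1) (h₀₁ : N 1 1 + (x - 3 / 4) * P 0 1 = N 0 0)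
    (h₁₀ : G 0 0 + (x - 5 / 4) * P 1 0 = G 1 1) (h₁₁ : G 0 1 + (x - 5 / 4) * P 1 1 = N 1 0) :
    !![0, 0; 1, 0] * G + !![0, 1; 0, 0] * N + (x - 1) • P
        - (1 / 2 : K) • (!![-1/2, 0; 0, 1/2] * P)
      = G * !![0, 0; 1, 0] + N * !![0, 1; 0, 0] := by
  ext r c
  fin_cases r <;> fin_cases c <;> simp only [Matrix.add_apply, Matrix.sub_apply,
      Matrix.smul_apply, Matrix.mul_apply, Fin.sum_univ_two, Matrix.of_apply, Matrix.cons_val',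
      Matrix.cons_val_zero, Matrix.cons_val_one, Matrix.cons_val_fin_one, Fin.zero_eta, Fin.mk_one,
      Fin.isValue, smul_eq_mul]
  · linear_combination h₀₀
  · linear_combination h₀₁
  · linear_combination h₁₀
  · linear_combination h₁₁

def stringGamma {K : Type*} [Field K] (a : ℤ → K) (i : ℤ) : Matrix (Fin 2) (Fin 2) K :=
  !![a (2 * i), -((4 * i + 3) / (4 * i + 1)) * a (2 * i + 1);
     a (2 * i - 1), -((4 * i + 1) / (4 * i - 1)) * a (2 * i)]

theorem stringGamma_string_equation {K : Type*} [Field K] [CharZero K] (a : ℤ → K)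
    (ha : ∀ n : ℤ, 16 * n * a n = -(2 * n - 1) * (2 * n - 5) * a (n - 3)) (i : ℤ) :
    !![0, 0; 1, 0] * stringGamma a i + !![0, 1; 0, 0] * stringGamma a (i + 1)
        + ((i : K) - 1) • stringGamma a (i - 1)
        - (1 / 2 : K) • (!![-1/2, 0; 0, 1/2] * stringGamma a (i - 1))
      = stringGamma a i * !![0, 0; 1, 0] + stringGamma a (i + 1) * !![0, 1; 0, 0] := by
  have ha' (n m : ℤ) (h : n - 3 = m) : 16 * (n : K) * a n = -(2 * n - 1) * (2 * n - 5) * a m :=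
    h ▸ ha n
  have h₀ := ha' (2 * i) (2 * (i - 1) - 1) (by ring)
  have h₁ := ha' (2 * i + 1) (2 * (i - 1)) (by ring)
  have h₂ := ha' (2 * (i + 1)) (2 * (i - 1) + 1) (by ring)
  push_cast at h₀ h₁ h₂
  apply string_equation_of_entries <;>
    simp only [stringGamma, Matrix.of_apply, Matrix.cons_val', Matrix.cons_val_zero,
      Matrix.cons_val_one, Matrix.cons_val_fin_one, Int.cast_add, Int.cast_sub, Int.cast_one,
      show 2 * (i + 1) - 1 = 2 * i + 1 by ring] <;>
    field_simp (disch := norm_cast; omega)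
  · linear_combination h₁ / 4
  · linear_combination -(4 * (i : K) - 3) / 4 * h₂
  · linear_combination h₀ / 4
  · linear_combination -(4 * (i : K) - 5) / 4 * h₁

lemma aSeq_eq_zero {m : ℤ} (h : ¬(0 ≤ m ∧ 3 ∣ m)) : aSeq m = 0 := if_neg h

lemma aSeq_three_mul (k : ℕ) :
    aSeq (3 * k) = (-3 / 4 : ℚ) ^ k * (1 / (k.factorial : ℚ)) *
      ∏ j ∈ Finset.range k, (((j : ℚ) + 5 / 6) * ((j : ℚ) + 1 / 6)) := by
  rw [aSeq, if_pos ⟨by positivity, dvd_mul_right 3 _⟩,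
    show (3 * (k : ℤ) / 3).toNat = k by omega]

lemma aSeq_zero : aSeq 0 = 1 := by simpa using aSeq_three_mul 0

lemma aSeq_three_mul_succ (k : ℕ) :
    48 * ((k : ℚ) + 1) * aSeq (3 * (k + 1 : ℕ)) =
      -(6 * k + 5) * (6 * k + 1) * aSeq (3 * k) := by
  rw [aSeq_three_mul, aSeq_three_mul, Finset.prod_range_succ, Nat.factorial_succ]
  set P := ∏ j ∈ Finset.range k, (((j : ℚ) + 5 / 6) * ((j : ℚ) + 1 / 6))
  have hk : (k.factorial : ℚ) ≠ 0 := Nat.cast_ne_zero.mpr k.factorial_ne_zero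
  push_cast
  field_simp
  ring

theorem aSeq_recurrence (n : ℤ) :
    16 * n * aSeq n = -(2 * n - 1) * (2 * n - 5) * aSeq (n - 3) := by
  by_cases hn : 0 < n ∧ 3 ∣ n
  · obtain ⟨k, rfl⟩ : ∃ k : ℕ, n = 3 * (k + 1 : ℕ) := ⟨(n / 3 - 1).toNat, by omega⟩
    rw [show 3 * ((k + 1 : ℕ) : ℤ) - 3 = 3 * k by push_cast; ring]
    have := aSeq_three_mul_succ k
    push_cast at this ⊢
    linear_combination this
  · rw [aSeq_eq_zero (m := n - 3) (by omega)]
    rcases (by omega : n = 0 ∨ ¬(0 ≤ n ∧ 3 ∣ n)) with rfl | h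
    · simp
    · simp [aSeq_eq_zero h]

lemma GammaA1_eq_stringGamma (i : ℕ) : GammaA1 i = stringGamma aSeq i := by
  simp [GammaA1, stringGamma]

lemma stringGamma_aSeq_neg_one : stringGamma aSeq (-1) = 0 := by
  ext r c
  fin_cases r <;> fin_cases c <;> simp [stringGamma, aSeq_eq_zero]

/-- `Γ₀ = 1` and the sequence `(Γ_i)` above solves the `A₁` reduced string
equation `A·Γ_i + B·Γ_{i+1} + (i−1)·Γ_{i−1} − (1/2)·ρ·Γ_{i−1} = Γ_i·A + Γ_{i+1}·B`
(with `Γ_{−1} = 0`), where `A = [[0,0],[1,0]]`, `B = [[0,1],[0,0]]`,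
`ρ = diag(−1/2, 1/2)`. -/
theorem stmt_8 :
    GammaA1 0 = 1 ∧
    ∀ i : ℕ,
      (!![0, 0; 1, 0] : Matrix (Fin 2) (Fin 2) ℚ) * GammaA1 i
        + (!![0, 1; 0, 0] : Matrix (Fin 2) (Fin 2) ℚ) * GammaA1 (i + 1)
        + ((i : ℚ) - 1) • (if i = 0 then 0 else GammaA1 (i - 1))
        - (1 / 2 : ℚ) • ((!![-1/2, 0; 0, 1/2] : Matrix (Fin 2) (Fin 2) ℚ) *
            (if i = 0 then 0 else GammaA1 (i - 1)))
      = GammaA1 i * (!![0, 0; 1, 0] : Matrix (Fin 2) (Fin 2) ℚ)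
        + GammaA1 (i + 1) * (!![0, 1; 0, 0] : Matrix (Fin 2) (Fin 2) ℚ) := by
  have hpred (i : ℕ) : (if i = 0 then 0 else GammaA1 (i - 1)) = stringGamma aSeq (i - 1) := by
    split_ifs with hi
    · simp [hi, stringGamma_aSeq_neg_one]
    · rw [GammaA1_eq_stringGamma, Nat.cast_pred (Nat.pos_of_ne_zero hi)]
  refine ⟨?_, fun i => ?_⟩
  · ext r c
    fin_cases r <;> fin_cases c <;> simp [GammaA1, aSeq_zero, aSeq_eq_zero]
  · rw [hpred]
    simpa only [GammaA1_eq_stringGamma, Nat.cast_add, Nat.cast_one, Int.cast_natCast] using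
      stringGamma_string_equation aSeq aSeq_recurrence i
end

section
/- Let ℓ ≥ 2, let ω ∈ ℂ be a primitive 2ℓ-th root of unity, and let ζ ∈ ℂ be nonzero. Let Λ(z) be the (2ℓ+1)×(2ℓ+1) matrix equal to ∑_{i=1}^{2ℓ} e_{i+1,i} + (z/2)·(e_{1,2ℓ} + e_{2,2ℓ+1}), where e_{a,b} denotes the elementary matrix with 1 in position (a,b). Let P(ζ) be the (2ℓ+1)×(2ℓ+1) matrix whose k-th column (0 ≤ k ≤ 2ℓ−1) is (1/(2ℓ))·(1/2, (ω^k ζ)^{−1}, (ω^k ζ)^{−2}, …, (ω^k ζ)^{−2ℓ})ᵀ and whose last column is (1/(2ℓ))·(ℓ, 0, …, 0, −2ℓ·ζ^{−2ℓ})ᵀ. Then P(ζ) is invertible and Λ(ζ^{2ℓ}) · P(ζ) = ζ · P(ζ) · D, where D is the diagonal matrix diag(1, ω, ω², …, ω^{2ℓ−1}, 0). -/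
/-!
For `x = ω^k ζ` we have `x^{2ℓ} = ζ^{2ℓ} = z`, so the corner entries `z/2` of `Λ(z)` close up
the cyclic shift on `(1/2, x⁻¹, …, x^{-2ℓ})`: the `k`-th column of `P(ζ)` is an eigenvector of
`Λ(z)` for the eigenvalue `ζ ω^k`, and the last column lies in its kernel. These `2ℓ+1`
eigenvalues are pairwise distinct because `ω` is primitive, so the columns of `P(ζ)` are linearly
independent.
-/

/-- The `(2ℓ+1)×(2ℓ+1)` matrix `Λ(z) = ∑_{i=1}^{2ℓ} e_{i+1,i} + (z/2)(e_{1,2ℓ} + e_{2,2ℓ+1})`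
(one-indexed elementary matrices `e_{a,b}`). -/
noncomputable def LamMatB (l : ℕ) (z : ℂ) : Matrix (Fin (2*l+1)) (Fin (2*l+1)) ℂ :=
  Matrix.of fun a b =>
    (if (a : ℕ) = (b : ℕ) + 1 then 1 else 0) +
    (if (a : ℕ) = 0 ∧ (b : ℕ) = 2*l - 1 then z / 2 else 0) +
    (if (a : ℕ) = 1 ∧ (b : ℕ) = 2*l then z / 2 else 0)

/-- The `(2ℓ+1)×(2ℓ+1)` matrix `P(ζ)` whose `k`-th column (`0 ≤ k ≤ 2ℓ−1`) is
`(1/(2ℓ))·(1/2, (ω^kζ)^{−1}, (ω^kζ)^{−2}, …, (ω^kζ)^{−2ℓ})ᵀ` and whose last column is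
`(1/(2ℓ))·(ℓ, 0, …, 0, −2ℓ·ζ^{−2ℓ})ᵀ`. -/
noncomputable def PmatB (l : ℕ) (ω ζ : ℂ) : Matrix (Fin (2*l+1)) (Fin (2*l+1)) ℂ :=
  Matrix.of fun i k =>
    (1 / (2 * (l : ℂ))) *
      (if (k : ℕ) < 2*l then
        (if (i : ℕ) = 0 then 1 / 2 else (ω ^ (k : ℕ) * ζ) ^ (-((i : ℕ) : ℤ)))
      else
        (if (i : ℕ) = 0 then (l : ℂ)
         else if (i : ℕ) = 2*l then -(2 * (l : ℂ)) * ζ ^ (-(2 * (l : ℤ))) else 0))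

open Matrix Finset

namespace Matrix

variable {K n : Type*} [Field K] [Fintype n] [DecidableEq n] {A P : Matrix n n K} {μ : n → K}

theorem mul_eq_mul_diagonal_of_mulVec_col (h : ∀ m, A *ᵥ P.col m = μ m • P.col m) :
    A * P = P * diagonal μ := by
  ext i m
  rw [mul_diagonal]
  exact (congrFun (h m) i).trans (mul_comm _ _)

theorem isUnit_of_mulVec_col_eq_smul (hμ : Function.Injective μ) (hP : ∀ m, P.col m ≠ 0)
    (h : ∀ m, A *ᵥ P.col m = μ m • P.col m) : IsUnit P :=
  linearIndependent_cols_iff_isUnit.mp <|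
    Module.End.eigenvectors_linearIndependent' (toLin' A) μ hμ P.col fun m =>
      ⟨Module.End.mem_eigenspace_iff.mpr (by simpa using h m), hP m⟩

end Matrix

theorem LamMatB_mulVec_apply (l : ℕ) (z : ℂ) (c : ℕ → ℂ) (i : Fin (2*l+1)) :
    (LamMatB l z *ᵥ fun j => c j) i =
      (if (i : ℕ) = 0 then z / 2 * c (2*l - 1) else c (i - 1)) +
        if (i : ℕ) = 1 then z / 2 * c (2*l) else 0 := by
  simp only [mulVec, dotProduct, LamMatB, of_apply, add_mul, ite_mul, one_mul, zero_mul,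
    sum_add_distrib]
  rw [Fin.sum_univ_eq_sum_range (fun b => if (i : ℕ) = b + 1 then c b else 0),
    Fin.sum_univ_eq_sum_range (fun b => if (i : ℕ) = 0 ∧ b = 2*l-1 then z / 2 * c b else 0),
    Fin.sum_univ_eq_sum_range (fun b => if (i : ℕ) = 1 ∧ b = 2*l then z / 2 * c b else 0)]
  have hi := i.isLt
  rcases Nat.eq_zero_or_pos (i : ℕ) with h0 | hpos
  · simp [h0, sum_ite_eq', show 2*l - 1 < 2*l+1 by omega]
  · obtain ⟨k, hk⟩ := Nat.exists_eq_add_one.mpr hpos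
    simp [hk, ite_and, sum_ite_eq, show k < 2*l+1 by omega]

theorem IsPrimitiveRoot.injective_pow_or_zero {M : Type*} [CommMonoidWithZero M]
    [NoZeroDivisors M] [Nontrivial M] {ω : M} {n : ℕ} (hω : IsPrimitiveRoot ω n) (hn : n ≠ 0) :
    Function.Injective fun k : Fin (n+1) => if (k : ℕ) < n then ω ^ (k : ℕ) else 0 := by
  have hpow (k : ℕ) : ω ^ k ≠ 0 := pow_ne_zero k (hω.ne_zero hn)
  intro a b hab
  simp only at hab
  split_ifs at hab with ha hb hb
  · exact Fin.ext (hω.pow_inj ha hb hab)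
  · exact absurd hab (hpow _)
  · exact absurd hab.symm (hpow _)
  · omega

noncomputable section columns

variable {l : ℕ}

def eigenCol (x : ℂ) (j : ℕ) : ℂ := if j = 0 then 1 / 2 else (x ^ j)⁻¹

def kernelCol (l : ℕ) (z : ℂ) (j : ℕ) : ℂ :=
  if j = 0 then l else if j = 2*l then -(2 * (l : ℂ)) * z⁻¹ else 0

theorem LamMatB_mulVec_eigenCol (hl : 0 < l) {x : ℂ} (hx : x ≠ 0) :
    (LamMatB l (x ^ (2*l)) *ᵥ fun j => eigenCol x j) =
      x • fun j : Fin (2*l+1) => eigenCol x j := by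
  ext i
  rw [LamMatB_mulVec_apply, Pi.smul_apply, smul_eq_mul]
  rcases (i : ℕ) with _ | _ | k
  · have hpow : x ^ (2*l) = x ^ (2*l - 1) * x := by
      rw [← pow_succ, Nat.sub_add_cancel (by omega)]
    simp only [eigenCol, if_true, show 2*l - 1 ≠ 0 by omega, if_false, zero_ne_one, add_zero]
    rw [hpow]
    field_simp
  · simp only [zero_add, one_ne_zero, ↓reduceIte, eigenCol, tsub_self, one_div,
      show 2*l ≠ 0 by omega, pow_one]
    field_simp
    ring
  · simp only [Nat.add_eq_zero_iff, one_ne_zero, and_false, and_self, ↓reduceIte, eigenCol,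
      add_tsub_cancel_right, pow_succ, _root_.mul_inv_rev, Nat.add_eq_right, add_zero]
    field_simp

theorem LamMatB_mulVec_kernelCol (hl : 0 < l) {z : ℂ} (hz : z ≠ 0) :
    (LamMatB l z *ᵥ fun j => kernelCol l z j) = 0 := by
  ext i
  have hi := i.isLt
  rw [LamMatB_mulVec_apply, Pi.zero_apply]
  rcases hn : (i : ℕ) with _ | _ | k
  · simp [kernelCol, show 2*l - 1 ≠ 0 by omega, show 2*l - 1 ≠ 2*l by omega]
  · simp only [zero_add, one_ne_zero, ↓reduceIte, kernelCol, tsub_self,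
      show 2*l ≠ 0 by omega]
    field_simp
    ring
  · simp [kernelCol, show k + 1 ≠ 2*l by omega]

theorem PmatB_col (ω ζ : ℂ) (m : Fin (2*l+1)) :
    (PmatB l ω ζ).col m = (1 / (2 * (l : ℂ))) •
      if (m : ℕ) < 2*l then fun j : Fin (2*l+1) => eigenCol (ω ^ (m : ℕ) * ζ) j
      else fun j => kernelCol l (ζ ^ (2*l)) j := by
  have hzpow : ζ ^ (-(2 * (l : ℤ))) = (ζ ^ (2*l))⁻¹ := by
    rw [← zpow_natCast, ← _root_.zpow_neg, Nat.cast_mul, Nat.cast_ofNat]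
  ext j
  split_ifs <;> simp [PmatB, eigenCol, kernelCol, *]

theorem LamMatB_mulVec_PmatB_col (hl : 0 < l) {ω ζ : ℂ} (hω : ω ^ (2*l) = 1) (hζ : ζ ≠ 0)
    (m : Fin (2*l+1)) :
    LamMatB l (ζ ^ (2*l)) *ᵥ (PmatB l ω ζ).col m =
      (ζ * if (m : ℕ) < 2*l then ω ^ (m : ℕ) else 0) • (PmatB l ω ζ).col m := by
  rw [PmatB_col, mulVec_smul, smul_comm]
  congr 1
  split_ifs
  · have hω0 : ω ≠ 0 := by
      rintro rfl
      simp [hl.ne'] at hω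
    have hroot : ζ ^ (2*l) = (ω ^ (m : ℕ) * ζ) ^ (2*l) := by
      rw [mul_pow, pow_right_comm, hω, one_pow, one_mul]
    rw [hroot, LamMatB_mulVec_eigenCol hl (mul_ne_zero (pow_ne_zero _ hω0) hζ), mul_comm ζ]
  · rw [LamMatB_mulVec_kernelCol hl (pow_ne_zero _ hζ), mul_zero, zero_smul]

theorem PmatB_col_ne_zero (hl : 0 < l) (ω ζ : ℂ) (m : Fin (2*l+1)) :
    (PmatB l ω ζ).col m ≠ 0 := by
  intro h
  have h0 := congrFun h 0
  simp only [col_apply, PmatB, of_apply, Pi.zero_apply, Fin.val_zero] at h0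
  split_ifs at h0 <;> simp [hl.ne'] at h0

end columns

/-- for `ℓ ≥ 2`, `ω` a primitive `2ℓ`-th root of unity and `ζ ≠ 0`,
`P(ζ)` is invertible and `Λ(ζ^{2ℓ}) · P(ζ) = ζ · P(ζ) · D` where
`D = diag(1, ω, ω², …, ω^{2ℓ−1}, 0)`. -/
theorem stmt_10 (l : ℕ) (hl : 2 ≤ l) (ω ζ : ℂ)
    (hω : IsPrimitiveRoot ω (2*l)) (hζ : ζ ≠ 0) :
    IsUnit (PmatB l ω ζ) ∧
    LamMatB l (ζ ^ (2*l)) * PmatB l ω ζ =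
      ζ • (PmatB l ω ζ *
        Matrix.diagonal fun k : Fin (2*l+1) =>
          if (k : ℕ) < 2*l then ω ^ (k : ℕ) else 0) := by
  have hl0 : 0 < l := by omega
  have hcol := LamMatB_mulVec_PmatB_col hl0 hω.pow_eq_one hζ
  refine ⟨isUnit_of_mulVec_col_eq_smul ?_ (PmatB_col_ne_zero hl0 ω ζ) hcol, ?_⟩
  · exact (mul_right_injective₀ hζ).comp (hω.injective_pow_or_zero (by omega))
  · rw [mul_eq_mul_diagonal_of_mulVec_col hcol, ← Matrix.mul_smul, ← diagonal_smul]
    rfl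
end
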